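/- If A is an approximately weakly amenable Banach algebra, then A is essential, i.e., the closed linear span of products A² is dense in A. -/

import Mathlib

open ContinuousLinearMap Filter Topology

open ContinuousLinearMap Filter Topology

/-- A Banach `A`-bimodule: a complete normed `ℂ`-space with commuting continuous
left and right `A`-actions, jointly bounded and bilinear. -/
structure BBimod (A : Type) [NonUnitalNormedRing A] [NormedSpace ℂ A] where
  carrier : Type
  [grp : NormedAddCommGroup carrier]
  [mod : NormedSpace ℂ carrier]
  [complete : CompleteSpace carrier]
  lsmul : A → carrier →L[ℂ] carrier
  rsmul : A → carrier →L[ℂ] carrier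
  lsmul_add : ∀ a b, lsmul (a + b) = lsmul a + lsmul b
  rsmul_add : ∀ a b, rsmul (a + b) = rsmul a + rsmul b
  lsmul_smul : ∀ (c : ℂ) (a), lsmul (c • a) = c • lsmul a
  rsmul_smul : ∀ (c : ℂ) (a), rsmul (c • a) = c • rsmul a
  lsmul_mul : ∀ a b, lsmul (a * b) = (lsmul a).comp (lsmul b)
  rsmul_mul : ∀ a b, rsmul (a * b) = (rsmul b).comp (rsmul a)
  lsmul_rsmul : ∀ a b, (lsmul a).comp (rsmul b) = (rsmul b).comp (lsmul a)
  bound : ∃ C : ℝ, ∀ a, ‖lsmul a‖ ≤ C * ‖a‖ ∧ ‖rsmul a‖ ≤ C * ‖a‖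

attribute [instance] BBimod.grp BBimod.mod BBimod.complete

variable {A : Type} [NonUnitalNormedRing A] [NormedSpace ℂ A]

/-- The dual of a Banach bimodule, with the canonical dual actions
`⟨u, Λ·a⟩ = ⟨a·u, Λ⟩` and `⟨u, a·Λ⟩ = ⟨u·a, Λ⟩`. -/
noncomputable def BBimod.dual (M : BBimod A) : BBimod A where
  carrier := M.carrier →L[ℂ] ℂ
  lsmul a := (compL ℂ M.carrier M.carrier ℂ).flip (M.rsmul a)
  rsmul a := (compL ℂ M.carrier M.carrier ℂ).flip (M.lsmul a)
  lsmul_add a b := by ext Λ x; simp [M.rsmul_add]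
  rsmul_add a b := by ext Λ x; simp [M.lsmul_add]
  lsmul_smul c a := by ext Λ x; simp [M.rsmul_smul]
  rsmul_smul c a := by ext Λ x; simp [M.lsmul_smul]
  lsmul_mul a b := by ext Λ x; simp [M.rsmul_mul]
  rsmul_mul a b := by ext Λ x; simp [M.lsmul_mul]
  lsmul_rsmul a b := by
    ext Λ x
    have h : M.lsmul b (M.rsmul a x) = M.rsmul a (M.lsmul b x) := by
      have := congrArg (fun T : M.carrier →L[ℂ] M.carrier => T x) (M.lsmul_rsmul b a)
      simpa using this
    simp [h]
  bound := by
    obtain ⟨C, hC⟩ := M.bound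
    refine ⟨C, fun a => ⟨?_, ?_⟩⟩
    · refine opNorm_le_bound _ ?_ fun Λ => ?_
      · exact le_trans (norm_nonneg _) (hC a).2
      · calc ‖Λ.comp (M.rsmul a)‖ ≤ ‖Λ‖ * ‖M.rsmul a‖ := opNorm_comp_le _ _
          _ ≤ (C * ‖a‖) * ‖Λ‖ := by
              rw [mul_comm]
              exact mul_le_mul_of_nonneg_right (hC a).2 (norm_nonneg _)
    · refine opNorm_le_bound _ ?_ fun Λ => ?_
      · exact le_trans (norm_nonneg _) (hC a).1
      · calc ‖Λ.comp (M.lsmul a)‖ ≤ ‖Λ‖ * ‖M.lsmul a‖ := opNorm_comp_le _ _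
          _ ≤ (C * ‖a‖) * ‖Λ‖ := by
              rw [mul_comm]
              exact mul_le_mul_of_nonneg_right (hC a).1 (norm_nonneg _)

variable (A) [IsScalarTower ℂ A A] [SMulCommClass ℂ A A] [CompleteSpace A]

/-- `A` as a Banach bimodule over itself. -/
noncomputable def BBimod.base : BBimod A where
  carrier := A
  lsmul a := ContinuousLinearMap.mul ℂ A a
  rsmul a := (ContinuousLinearMap.mul ℂ A).flip a
  lsmul_add a b := by ext x; simp [add_mul]
  rsmul_add a b := by ext x; simp [mul_add]
  lsmul_smul c a := by ext x; simp [smul_mul_assoc]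
  rsmul_smul c a := by ext x; simp [mul_smul_comm]
  lsmul_mul a b := by ext x; simp [mul_assoc]
  rsmul_mul a b := by ext x; simp [mul_assoc]
  lsmul_rsmul a b := by ext x; simp [mul_assoc]
  bound := by
    refine ⟨1, fun a => ⟨?_, ?_⟩⟩
    · simpa using ContinuousLinearMap.opNorm_mul_apply_le ℂ A a
    · refine le_trans (opNorm_le_bound _ (norm_nonneg a) fun x => ?_) (by simp)
      simpa [mul_comm] using norm_mul_le x a


/-- The `n`-th dual `A^(n)` of `A` as a Banach `A`-bimodule. -/
noncomputable def iterDual : ℕ → BBimod A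
  | 0 => BBimod.base A
  | n + 1 => (iterDual n).dual

variable {A}

/-- `D` is a derivation from `A` into the Banach bimodule `M`. -/
def IsDerivation (M : BBimod A) (D : A →L[ℂ] M.carrier) : Prop :=
  ∀ a b : A, D (a * b) = M.lsmul a (D b) + M.rsmul b (D a)

/-- `D` is an inner derivation. -/
def IsInner (M : BBimod A) (D : A →L[ℂ] M.carrier) : Prop :=
  ∃ x : M.carrier, ∀ a : A, D a = M.lsmul a x - M.rsmul a x

/-- `D` is approximately inner: there is a net `(x_i)` in `M` with
`D a = lim_i (a·x_i − x_i·a)` for every `a`. -/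
def IsApproxInner (M : BBimod A) (D : A →L[ℂ] M.carrier) : Prop :=
  ∃ (ι : Type) (l : Filter ι) (x : ι → M.carrier), l.NeBot ∧
    ∀ a : A, Tendsto (fun i => M.lsmul a (x i) - M.rsmul a (x i)) l (𝓝 (D a))

variable (A)

/-- `A` is weakly amenable. -/
def WeaklyAmenable : Prop :=
  ∀ D : A →L[ℂ] (iterDual A 1).carrier, IsDerivation (iterDual A 1) D → IsInner (iterDual A 1) D

/-- `A` is approximately `n`-weakly amenable. -/
def ApproxNWeaklyAmenable (n : ℕ) : Prop :=
  ∀ D : A →L[ℂ] (iterDual A n).carrier,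
    IsDerivation (iterDual A n) D → IsApproxInner (iterDual A n) D

/-- `A` is `n`-weakly amenable. -/
def NWeaklyAmenable (n : ℕ) : Prop :=
  ∀ D : A →L[ℂ] (iterDual A n).carrier,
    IsDerivation (iterDual A n) D → IsInner (iterDual A n) D

/-- `A` is approximately weakly amenable. -/
def ApproxWeaklyAmenable : Prop := ApproxNWeaklyAmenable A 1

/-- `A` is approximately amenable: every continuous derivation into the dual of a
Banach `A`-bimodule is approximately inner. -/
def ApproxAmenable : Prop :=
  ∀ (X : BBimod A) (D : A →L[ℂ] X.dual.carrier), IsDerivation X.dual D → IsApproxInner X.dual D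
variable (A : Type) [NonUnitalNormedRing A] [NormedSpace ℂ A]
  [IsScalarTower ℂ A A] [SMulCommClass ℂ A A] [CompleteSpace A]

/-! If the products do not span a dense subspace, Hahn–Banach gives a functional `f ≠ 0`
annihilating `A²`, and `a ↦ f a • f` is then a derivation `A → A*`: every term of the Leibniz
rule is a value of `f` on a product. But an approximately inner derivation `D` into `A*`
satisfies `D a a = 0`, because `(a • x - x • a) a = x (a * a) - x (a * a)`. At a point `u` with
`f u ≠ 0` this reads `f u * f u = 0`. -/

theorem Submodule.exists_dual_map_eq_zero_of_topologicalClosure_ne_top {𝕜 E : Type*} [RCLike 𝕜]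
    [NormedAddCommGroup E] [NormedSpace 𝕜 E] (p : Submodule 𝕜 E) (hp : p.topologicalClosure ≠ ⊤) :
    ∃ (f : StrongDual 𝕜 E) (x : E), f x ≠ 0 ∧ ∀ y ∈ p, f y = 0 := by
  obtain ⟨x, hx⟩ := SetLike.exists_not_mem_of_ne_top _ hp rfl
  have : IsClosed (p.topologicalClosure : Set E) := p.isClosed_topologicalClosure
  obtain ⟨g, hg⟩ := SeparatingDual.exists_ne_zero (R := 𝕜)
    (mt (Submodule.Quotient.mk_eq_zero _).1 hx)
  refine ⟨g.comp p.topologicalClosure.mkQL, x, hg, fun y hy => ?_⟩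
  simp [(Submodule.Quotient.mk_eq_zero _).2 (p.le_topologicalClosure hy)]

section

variable {A}

/- `(iterDual A 1).carrier` is `A →L[ℂ] ℂ` only after unfolding `iterDual`, so its elements
are not coerced to functions on `A` without this instance. -/
noncomputable instance : FunLike (iterDual A 1).carrier A ℂ :=
  inferInstanceAs (FunLike (A →L[ℂ] ℂ) A ℂ)

@[ext]
theorem iterDual_one_ext {f g : (iterDual A 1).carrier} (h : ∀ u, f u = g u) : f = g :=
  ContinuousLinearMap.ext h

@[simp]
theorem iterDual_one_add_apply (f g : (iterDual A 1).carrier) (u : A) :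
    (f + g) u = f u + g u := rfl

@[simp]
theorem iterDual_one_sub_apply (f g : (iterDual A 1).carrier) (u : A) :
    (f - g) u = f u - g u := rfl

@[simp]
theorem iterDual_one_lsmul_apply (a u : A) (f : (iterDual A 1).carrier) :
    (iterDual A 1).lsmul a f u = f (u * a) := rfl

@[simp]
theorem iterDual_one_rsmul_apply (a u : A) (f : (iterDual A 1).carrier) :
    (iterDual A 1).rsmul a f u = f (a * u) := rfl

@[simp]
theorem iterDual_one_smulRight_apply (f g : A →L[ℂ] ℂ) (a u : A) :
    (f.smulRight g : A →L[ℂ] (iterDual A 1).carrier) a u = f a * g u := rfl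

theorem isDerivation_smulRight {f g : A →L[ℂ] ℂ} (hf : ∀ a b, f (a * b) = 0)
    (hg : ∀ a b, g (a * b) = 0) : IsDerivation (iterDual A 1) (f.smulRight g) := by
  intro a b
  ext u
  simp [hf, hg]

theorem IsApproxInner.apply_self_eq_zero {D : A →L[ℂ] (iterDual A 1).carrier}
    (hD : IsApproxInner (iterDual A 1) D) (a : A) : D a a = 0 := by
  obtain ⟨ι, l, x, hl, hx⟩ := hD
  have hev : Continuous fun f : (iterDual A 1).carrier => f a :=
    (ContinuousLinearMap.apply ℂ ℂ a).continuous
  refine tendsto_nhds_unique ((hev.tendsto _).comp (hx a)) (tendsto_const_nhds.congr fun i => ?_)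
  simp

end

theorem essential_of_approxWeaklyAmenable (h : ApproxWeaklyAmenable A) :
    (Submodule.span ℂ {x : A | ∃ a b : A, a * b = x}).topologicalClosure = ⊤ := by
  by_contra hne
  obtain ⟨f, u, hu, hf⟩ := Submodule.exists_dual_map_eq_zero_of_topologicalClosure_ne_top _ hne
  have hmul : ∀ a b : A, f (a * b) = 0 := fun a b => hf _ (Submodule.subset_span ⟨a, b, rfl⟩)
  exact hu (mul_self_eq_zero.1 ((h _ (isDerivation_smulRight hmul hmul)).apply_self_eq_zero u))
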